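/- For π = (2), the conjugated fermion mode ψ^{(2)}_{−3/2} := L^⊥_{(2)} ψ_{−3/2} (L^⊥_{(2)})^{-1} applied followed by ψ^{*(2)}_{−1/2} to the vacuum gives, after projecting to symmetric functions via the Boson–Fermion correspondence, the function S_{(2)} − S_∅ = h_2 − 1; i.e. ⟨vac| e^{H(x)} ψ^{(2)}_{−3/2} ψ^{*(2)}_{−1/2} |vac⟩ = h_2 − 1. -/

import Mathlib

open Classical

/-- The fermionic Fock space: formal ℚ-linear combinations of sequences of
half-integers (Maya diagrams `u₁ < u₂ < ⋯` are such sequences, indexed from 0). -/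
def Fock : Type := (ℕ → ℚ) →₀ ℚ

noncomputable instance : AddCommGroup Fock := Finsupp.instAddCommGroup
noncomputable instance : Module ℚ Fock := Finsupp.module _ _

/-- Delete the i-th term of a sequence. -/
def deleteIdx (i : ℕ) (u : ℕ → ℚ) : ℕ → ℚ :=
  fun k => if k < i then u k else u (k + 1)

/-- Insert the value `a` at position i of a sequence. -/
def insertIdx (i : ℕ) (a : ℚ) (u : ℕ → ℚ) : ℕ → ℚ :=
  fun k => if k < i then u k else if k = i then a else u (k - 1)

open Classical in
/-- The action of the fermion ψ_j on a basis Maya diagram: remove the stone at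
position −j (with sign (−1)^{i−1} if it is the i-th stone), or 0. -/
noncomputable def psiVec (j : ℚ) (u : ℕ → ℚ) : Fock :=
  if h : ∃ i : ℕ, u i = -j then
    ((-1 : ℚ)) ^ (Nat.find h) • Finsupp.single (deleteIdx (Nat.find h) u) 1
  else 0

open Classical in
/-- The action of the fermion ψ*_j on a basis Maya diagram: insert a stone at
position j between u_i and u_{i+1} (with sign (−1)^i), or 0. -/
noncomputable def psiStarVec (j : ℚ) (u : ℕ → ℚ) : Fock :=
  if ∃ i : ℕ, u i = j then 0
  else if h : ∃ i : ℕ, j < u i then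
    ((-1 : ℚ)) ^ (Nat.find h) • Finsupp.single (insertIdx (Nat.find h) j u) 1
  else 0

/-- The fermion ψ_j as a linear operator on Fock space. -/
noncomputable def psiOp (j : ℚ) : Fock →ₗ[ℚ] Fock :=
  Finsupp.lsum ℚ fun u => LinearMap.toSpanSingleton ℚ Fock (psiVec j u)

/-- The fermion ψ*_j as a linear operator on Fock space. -/
noncomputable def psiStarOp (j : ℚ) : Fock →ₗ[ℚ] Fock :=
  Finsupp.lsum ℚ fun u => LinearMap.toSpanSingleton ℚ Fock (psiStarVec j u)

/-- The charge-zero Maya diagram of a partition λ: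
u_j = j + 1/2 − λ'_j (0-indexed), λ' the conjugate partition, so that
ψ_{−n−1/2} ψ*_{−m−1/2}|vac⟩ corresponds (up to sign) to the Frobenius
partition (n|m) as in the paper. -/
noncomputable def mayaOf (lam : YoungDiagram) : ℕ → ℚ :=
  fun j => (j : ℚ) + 1/2 - (lam.colLen j : ℚ)

/-- The basis vector |λ⟩ of the charge-zero Fock space. -/
noncomputable def ket (lam : YoungDiagram) : Fock :=
  Finsupp.single (mayaOf lam) 1

/-!
STATEMENT 18: ⟨vac| e^{H(x)} ψ^{(2)}_{−3/2} ψ^{*(2)}_{−1/2} |vac⟩ = h₂ − 1.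
Here ψ^{(2)}_j = L ψ_j L⁻¹, ψ^{*(2)}_j = L ψ*_j L⁻¹ with
L = L^⊥_{(2)} = exp(−B), B = ∑_{n≥1} (1/n)(½ Hₙ² + ½ H_{2n}), and Hₙ the
Heisenberg operators built from fermion bilinears. Since B|vac⟩ = 0 (so
L⁻¹|vac⟩ = |vac⟩), the left-hand side equals Φ(L(ψ_{−3/2} ψ*_{−1/2} |vac⟩)),
where Φ is the Boson–Fermion correspondence pairing ⟨vac|e^{H(x)}·⟩, which
sends |λ⟩ to the Schur function S_λ. The exponential L = exp(−B) is
characterized by its truncated series on vectors killed by a power of B.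
-/

/-- The Heisenberg operator Hₙ = ∑_{j∈ℤ+1/2} ψ_{−j} ψ*_{j+n} on Fock space
(normal ordering is immaterial for n ≥ 1). -/
noncomputable def Hop (n : ℕ) (v : Fock) : Fock :=
  ∑ᶠ m : ℤ, psiOp (-((m : ℚ) + 1/2)) (psiStarOp ((m : ℚ) + 1/2 + n) v)

/-- B = ∑_{n≥1} (1/n)(½ Hₙ ∘ Hₙ + ½ H_{2n}), so that L^⊥_{(2)} = exp(−B). -/
noncomputable def BopF (v : Fock) : Fock :=
  ∑ᶠ n : ℕ, if n = 0 then 0 else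
    ((n : ℚ)⁻¹) • (((1 : ℚ)/2) • Hop n (Hop n v) + ((1 : ℚ)/2) • Hop (2 * n) v)

/-- The content (weight) of a semistandard Young tableau. -/
noncomputable def ssytWeight {μ : YoungDiagram} (T : SemistandardYoungTableau μ) :
    ℕ →₀ ℕ :=
  ∑ c ∈ μ.cells, Finsupp.single (T c.1 c.2) 1

/-- The Schur function S_μ in countably many variables. -/
noncomputable def schurFn (μ : YoungDiagram) : MvPowerSeries ℕ ℚ :=
  fun d => (Nat.card {T : SemistandardYoungTableau μ // ssytWeight T = d} : ℚ)

/-- The n-th complete homogeneous symmetric function. -/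
noncomputable def hFn (n : ℕ) : MvPowerSeries ℕ ℚ :=
  fun d => if (d.sum fun _ e => e) = n then 1 else 0


lemma psiVec_eq (j : ℚ) (u : ℕ → ℚ) (i : ℕ) (h1 : u i = -j) (h2 : ∀ k < i, u k ≠ -j) :
    psiVec j u = ((-1 : ℚ)) ^ i • Finsupp.single (deleteIdx i u) 1 := by
  have h : ∃ k, u k = -j := ⟨i, h1⟩
  have hf : Nat.find h = i := (Nat.find_eq_iff h).2 ⟨h1, fun m hm => h2 m hm⟩
  rw [psiVec, dif_pos h, hf]

lemma psiVec_eq_zero (j : ℚ) (u : ℕ → ℚ) (h : ∀ k, u k ≠ -j) : psiVec j u = 0 := by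
  rw [psiVec, dif_neg]; push_neg; exact h

lemma psiStarVec_eq (j : ℚ) (u : ℕ → ℚ) (i : ℕ) (h0 : ∀ k, u k ≠ j)
    (h1 : j < u i) (h2 : ∀ k < i, ¬ j < u k) :
    psiStarVec j u = ((-1 : ℚ)) ^ i • Finsupp.single (insertIdx i j u) 1 := by
  have h : ∃ k, j < u k := ⟨i, h1⟩
  have hf : Nat.find h = i := (Nat.find_eq_iff h).2 ⟨h1, fun m hm => h2 m hm⟩
  rw [psiStarVec, if_neg (by push_neg; exact h0), dif_pos h, hf]

lemma psiStarVec_eq_zero (j : ℚ) (u : ℕ → ℚ) (i : ℕ) (h : u i = j) : psiStarVec j u = 0 := by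
  rw [psiStarVec, if_pos ⟨i, h⟩]

lemma psiOp_single (j : ℚ) (u : ℕ → ℚ) (c : ℚ) :
    psiOp j (Finsupp.single u c) = c • psiVec j u := by
  show ((Finsupp.single u c : (ℕ → ℚ) →₀ ℚ).sum fun w d => d • psiVec j w) = c • psiVec j u
  exact Finsupp.sum_single_index (by simp)

lemma psiStarOp_single (j : ℚ) (u : ℕ → ℚ) (c : ℚ) :
    psiStarOp j (Finsupp.single u c) = c • psiStarVec j u := by
  show ((Finsupp.single u c : (ℕ → ℚ) →₀ ℚ).sum fun w d => d • psiStarVec j w) = c • psiStarVec j u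
  exact Finsupp.sum_single_index (by simp)


def seqE : ℕ → ℚ := fun k => (k : ℚ) + 1/2
def seqW : ℕ → ℚ := fun k => (k : ℚ) - 1/2
def seq1 : ℕ → ℚ := fun k => if k = 0 then -(1/2) else (k : ℚ) + 1/2
def seq2 : ℕ → ℚ := fun k => if k < 2 then (k : ℚ) - 1/2 else (k : ℚ) + 1/2

def yd1 : YoungDiagram :=
  ⟨{(0,0)}, by
    intro a b hle ha
    simp only [Finset.coe_singleton, Set.mem_singleton_iff] at ha ⊢
    subst ha
    obtain ⟨h1, h2⟩ := hle
    ext <;> omega⟩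

def yd2 : YoungDiagram :=
  ⟨{(0,0),(0,1)}, by
    intro a b hle ha
    simp only [Finset.coe_insert, Finset.coe_singleton, Set.mem_insert_iff,
      Set.mem_singleton_iff] at ha ⊢
    obtain ⟨h1, h2⟩ := hle
    rcases ha with rfl | rfl
    · left; ext <;> omega
    · rcases Nat.le_one_iff_eq_zero_or_eq_one.mp h2 with h | h
      · left; ext <;> omega
      · right; ext <;> omega⟩

lemma mem_yd1 (c : ℕ × ℕ) : c ∈ yd1 ↔ c = (0,0) := by
  rw [← YoungDiagram.mem_cells]; simp [yd1]

lemma mem_yd2 (c : ℕ × ℕ) : c ∈ yd2 ↔ c = (0,0) ∨ c = (0,1) := by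
  rw [← YoungDiagram.mem_cells]; simp [yd2]

lemma colLen_yd1 (j : ℕ) : yd1.colLen j = if j = 0 then 1 else 0 := by
  split
  · next h =>
    subst h
    have a : 0 < yd1.colLen 0 := YoungDiagram.mem_iff_lt_colLen.mp ((mem_yd1 (0,0)).mpr rfl)
    have b : ¬ 1 < yd1.colLen 0 := fun hh =>
      by simpa [mem_yd1, Prod.ext_iff] using YoungDiagram.mem_iff_lt_colLen.mpr hh
    omega
  · next h =>
    have a : ¬ 0 < yd1.colLen j := fun hh =>
      by have := YoungDiagram.mem_iff_lt_colLen.mpr hh; simp [mem_yd1, Prod.ext_iff] at this; omega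
    omega

lemma colLen_yd2 (j : ℕ) : yd2.colLen j = if j < 2 then 1 else 0 := by
  split
  · next h =>
    have a : 0 < yd2.colLen j := by
      apply YoungDiagram.mem_iff_lt_colLen.mp
      rw [mem_yd2]
      interval_cases j
      · left; rfl
      · right; rfl
    have b : ¬ 1 < yd2.colLen j := fun hh =>
      by have := YoungDiagram.mem_iff_lt_colLen.mpr hh; simp [mem_yd2, Prod.ext_iff] at this
    omega
  · next h =>
    have a : ¬ 0 < yd2.colLen j := fun hh =>
      by have := YoungDiagram.mem_iff_lt_colLen.mpr hh; simp [mem_yd2, Prod.ext_iff] at this; omega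
    omega

lemma colLen_bot' (j : ℕ) : (⊥ : YoungDiagram).colLen j = 0 := by
  have a : ¬ 0 < (⊥ : YoungDiagram).colLen j := fun hh =>
    YoungDiagram.notMem_bot _ (YoungDiagram.mem_iff_lt_colLen.mpr hh)
  omega

lemma mayaOf_bot : mayaOf ⊥ = seqE := by
  funext k; simp [mayaOf, seqE, colLen_bot']

lemma mayaOf_yd1 : mayaOf yd1 = seq1 := by
  funext k; simp only [mayaOf, seq1, colLen_yd1]
  split <;> rename_i h
  · subst h; norm_num
  · norm_num

lemma mayaOf_yd2 : mayaOf yd2 = seq2 := by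
  funext k; simp only [mayaOf, seq2, colLen_yd2]
  split <;> rename_i h
  · push_cast; ring
  · norm_num

lemma cast_int_le {a b : ℤ} (h : a ≤ b) : (a:ℚ) ≤ (b:ℚ) := by exact_mod_cast h

-- term for a single basis vector
lemma term_single (n : ℕ) (m : ℤ) (u : ℕ → ℚ) :
    psiOp (-((m : ℚ) + 1/2)) (psiStarOp ((m : ℚ) + 1/2 + n) (Finsupp.single u 1))
      = psiOp (-((m : ℚ) + 1/2)) (psiStarVec ((m : ℚ) + 1/2 + n) u) := by
  rw [psiStarOp_single, one_smul]

-- if the stone to insert is already present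
lemma term_mem (n : ℕ) (m : ℤ) (u : ℕ → ℚ) (i : ℕ) (h : u i = (m : ℚ) + 1/2 + n) :
    psiOp (-((m : ℚ) + 1/2)) (psiStarOp ((m : ℚ) + 1/2 + n) (Finsupp.single u 1)) = 0 := by
  rw [term_single, psiStarVec_eq_zero _ _ i h, map_zero]

-- low insertion: the inserted stone goes below everything, then removal fails
lemma term_low (n : ℕ) (hn : 1 ≤ n) (m : ℤ) (u : ℕ → ℚ)
    (hlt : ∀ k, (m : ℚ) + 1/2 + n < u k) :
    psiOp (-((m : ℚ) + 1/2)) (psiStarOp ((m : ℚ) + 1/2 + n) (Finsupp.single u 1)) = 0 := by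
  have hn1 : (1 : ℚ) ≤ n := by exact_mod_cast hn
  rw [term_single, psiStarVec_eq _ _ 0 ?h0 ?h1 ?h2]
  case h0 => intro k hk; have := hlt k; rw [hk] at this; linarith
  case h1 => exact hlt 0
  case h2 => intro k hk; exact absurd hk (Nat.not_lt_zero k)
  erw [map_smul, psiOp_single, psiVec_eq_zero, smul_zero, smul_zero]
  intro k
  rw [neg_neg]
  cases k with
  | zero => intro hh; simp [insertIdx] at hh; linarith
  | succ k =>
      simp only [insertIdx]
      rw [if_neg (by omega), if_neg (by omega)]
      have := hlt (k + 1 - 1)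
      intro hh; rw [hh] at this; linarith

-- vacuum: Hop n kills it for n ≥ 1
lemma HopE (n : ℕ) (hn : 1 ≤ n) : Hop n (Finsupp.single seqE 1) = 0 := by
  apply finsum_eq_zero_of_forall_eq_zero
  intro m
  by_cases hm : 0 ≤ m + n
  · apply term_mem n m seqE (m + n).toNat
    have hc : (((m + (n:ℤ)).toNat : ℤ) : ℚ) = (m : ℚ) + n := by
      rw [Int.toNat_of_nonneg hm]; push_cast; ring
    simp only [seqE]
    push_cast at hc ⊢
    rw [hc]; ring
  · apply term_low n hn m seqE
    intro k; simp only [seqE]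
    have h0 : (0:ℚ) ≤ k := Nat.cast_nonneg k
    have hmn : (m:ℚ) + n ≤ -1 := by exact_mod_cast (by omega : m + (n:ℤ) ≤ -1)
    linarith

lemma seq1_low : ∀ k, -(1/2 : ℚ) ≤ seq1 k := by
  intro k; simp only [seq1]; split
  · linarith
  · have : (0:ℚ) ≤ k := Nat.cast_nonneg k; linarith

lemma seq2_low : ∀ k, -(1/2 : ℚ) ≤ seq2 k := by
  intro k; simp only [seq2]; split <;>
    [skip; skip] <;> (have : (0:ℚ) ≤ k := Nat.cast_nonneg k; linarith)

-- seq1 terms with m ≠ -n are zero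
lemma term1_ne (n : ℕ) (hn : 1 ≤ n) (m : ℤ) (hm : m ≠ -n) :
    psiOp (-((m : ℚ) + 1/2)) (psiStarOp ((m : ℚ) + 1/2 + n) (Finsupp.single seq1 1)) = 0 := by
  rcases lt_trichotomy (m + n) 0 with h | h | h
  · rcases eq_or_lt_of_le (show m + n ≤ -1 by omega) with h' | h'
    · -- m + n = -1 : j = -1/2 = seq1 0
      apply term_mem n m seq1 0
      have hq : (m:ℚ) + n = -1 := by exact_mod_cast h'
      simp only [seq1]; norm_num; linarith
    · apply term_low n hn m seq1
      intro k
      have hmn : (m:ℚ) + n ≤ -2 := by exact_mod_cast (by omega : m + (n:ℤ) ≤ -2)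
      have := seq1_low k
      linarith
  · exact absurd (by omega : m = -(n:ℤ)) hm
  · -- m + n ≥ 1: stone present at index (m+n).toNat ≥ 1
    apply term_mem n m seq1 (m + n).toNat
    have hpos : (m + (n:ℤ)).toNat ≠ 0 := by omega
    have hc : (((m + (n:ℤ)).toNat : ℤ) : ℚ) = (m : ℚ) + n := by
      rw [Int.toNat_of_nonneg (by omega)]; push_cast; ring
    simp only [seq1, if_neg hpos]
    push_cast at hc ⊢
    rw [hc]; ring

-- sequence rewriting lemmas
lemma insert1_seq1 : insertIdx 1 (1/2 : ℚ) seq1 = seqW := by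
  funext k
  match k with
  | 0 => norm_num [insertIdx, seq1, seqW]
  | 1 => norm_num [insertIdx, seq1, seqW]
  | (k+2) =>
      simp only [insertIdx, seqW, seq1]
      rw [if_neg (by omega), if_neg (by omega), if_neg (by omega)]
      push_cast; ring

lemma insert2_seq2 : insertIdx 2 (3/2 : ℚ) seq2 = seqW := by
  funext k
  match k with
  | 0 => norm_num [insertIdx, seq2, seqW]
  | 1 => norm_num [insertIdx, seq2, seqW]
  | 2 => norm_num [insertIdx, seq2, seqW]
  | (k+3) =>
      simp only [insertIdx, seq2, seqW]
      rw [if_neg (by omega), if_neg (by omega), if_neg (by omega)]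
      push_cast; ring

lemma insert0_seqE : insertIdx 0 (-(1/2) : ℚ) seqE = seqW := by
  funext k
  match k with
  | 0 => norm_num [insertIdx, seqE, seqW]
  | (k+1) =>
      simp only [insertIdx, seqE, seqW]
      rw [if_neg (by omega), if_neg (by omega)]
      push_cast; ring

lemma del0_seqW : deleteIdx 0 seqW = seqE := by
  funext k
  simp only [deleteIdx, seqW, seqE, if_neg (Nat.not_lt_zero k)]
  push_cast; ring

lemma del1_seqW : deleteIdx 1 seqW = seq1 := by
  funext k
  match k with
  | 0 => norm_num [deleteIdx, seqW, seq1]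
  | (k+1) =>
      simp only [deleteIdx, seqW, seq1]
      rw [if_neg (by omega), if_neg (by omega)]
      push_cast; ring

lemma del2_seqW : deleteIdx 2 seqW = seq2 := by
  funext k
  match k with
  | 0 => norm_num [deleteIdx, seqW, seq2]
  | 1 => norm_num [deleteIdx, seqW, seq2]
  | (k+2) =>
      simp only [deleteIdx, seqW, seq2]
      rw [if_neg (by omega), if_neg (by omega)]
      push_cast; ring

lemma seq1_ne (c : ℚ) (h0 : c ≠ -(1/2)) (hc : c < 3/2) : ∀ k, seq1 k ≠ c := by
  intro k
  match k with
  | 0 => intro hh; apply h0; rw [← hh]; norm_num [seq1]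
  | (k+1) =>
      simp only [seq1, if_neg (Nat.succ_ne_zero k)]
      have : (1:ℚ) ≤ (k+1 : ℕ) := by exact_mod_cast Nat.one_le_iff_ne_zero.mpr (Nat.succ_ne_zero k)
      push_cast at this ⊢
      intro hh; rw [← hh] at hc; linarith

lemma seq2_ne (c : ℚ) (h0 : c ≠ -(1/2)) (h1 : c ≠ 1/2) (hc : c < 5/2) : ∀ k, seq2 k ≠ c := by
  intro k
  match k with
  | 0 => intro hh; apply h0; rw [← hh]; norm_num [seq2]
  | 1 => intro hh; apply h1; rw [← hh]; norm_num [seq2]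
  | (k+2) =>
      simp only [seq2]
      rw [if_neg (by omega)]
      have : (2:ℚ) ≤ (k+2 : ℕ) := by push_cast; linarith [Nat.cast_nonneg (α := ℚ) k]
      push_cast at this ⊢
      intro hh; rw [← hh] at hc; linarith

lemma seqW_ne (c : ℚ) (hc : c < -(1/2)) : ∀ k, seqW k ≠ c := by
  intro k
  simp only [seqW]
  have : (0:ℚ) ≤ k := Nat.cast_nonneg k
  intro hh; rw [← hh] at hc; linarith

-- Hop on |1⟩
lemma Hop1_one : Hop 1 (Finsupp.single seq1 1) = -(Finsupp.single seqE 1) := by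
  unfold Hop; rw [finsum_eq_single _ (-1 : ℤ)]
  · have e1 : ((-1 : ℤ) : ℚ) + 1/2 + ((1:ℕ):ℚ) = 1/2 := by norm_num
    have e2 : -(((-1 : ℤ) : ℚ) + 1/2) = 1/2 := by norm_num
    rw [e1, e2, psiStarOp_single, one_smul,
      psiStarVec_eq _ _ 1 (seq1_ne _ (by norm_num) (by norm_num))
        (by norm_num [seq1]) (by intro k hk; interval_cases k; norm_num [seq1]),
      insert1_seq1]
    erw [map_smul, psiOp_single,
      psiVec_eq _ _ 0 (by norm_num [seqW]) (by intro k hk; omega),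
      del0_seqW]
    norm_num
    erw [one_smul]
    rfl
  · intro m hm
    exact term1_ne 1 (le_refl 1) m (by intro h; apply hm; omega)

lemma Hop1_ge2 (n : ℕ) (hn : 2 ≤ n) : Hop n (Finsupp.single seq1 1) = 0 := by
  apply finsum_eq_zero_of_forall_eq_zero
  intro m
  by_cases hm : m = -(n:ℤ)
  · subst hm
    have e1 : ((-(n:ℤ) : ℤ) : ℚ) + 1/2 + ((n:ℕ):ℚ) = 1/2 := by push_cast; ring
    rw [psiStarOp_single, one_smul, e1,
      psiStarVec_eq _ _ 1 (seq1_ne _ (by norm_num) (by norm_num))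
        (by norm_num [seq1]) (by intro k hk; interval_cases k; norm_num [seq1]),
      insert1_seq1]
    erw [map_smul, psiOp_single]
    rw [psiVec_eq_zero, smul_zero, smul_zero]
    apply seqW_ne
    have h2 : (2:ℚ) ≤ n := by exact_mod_cast hn
    push_cast
    linarith
  · exact term1_ne n (by omega) m hm

lemma term2_ne (n : ℕ) (hn : 1 ≤ n) (m : ℤ) (hm : m ≠ 1 - n) :
    psiOp (-((m : ℚ) + 1/2)) (psiStarOp ((m : ℚ) + 1/2 + n) (Finsupp.single seq2 1)) = 0 := by
  rcases lt_trichotomy (m + n) 0 with h | h | h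
  · rcases eq_or_lt_of_le (show m + n ≤ -1 by omega) with h' | h'
    · -- j = -1/2 = seq2 0
      apply term_mem n m seq2 0
      have hq : (m:ℚ) + n = -1 := by exact_mod_cast h'
      simp only [seq2]; norm_num; linarith
    · apply term_low n hn m seq2
      intro k
      have hmn : (m:ℚ) + n ≤ -2 := by exact_mod_cast (by omega : m + (n:ℤ) ≤ -2)
      have := seq2_low k
      linarith
  · -- j = 1/2 = seq2 1
    apply term_mem n m seq2 1
    have hq : (m:ℚ) + n = 0 := by exact_mod_cast h
    simp only [seq2]; norm_num; linarith
  · -- m + n ≥ 2 (since m+n=1 means m = 1-n, excluded)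
    have h2 : 2 ≤ m + n := by omega
    apply term_mem n m seq2 (m + n).toNat
    have hge : ¬ (m + (n:ℤ)).toNat < 2 := by omega
    have hc : (((m + (n:ℤ)).toNat : ℤ) : ℚ) = (m : ℚ) + n := by
      rw [Int.toNat_of_nonneg (by omega)]; push_cast; ring
    simp only [seq2, if_neg hge]
    push_cast at hc ⊢
    rw [hc]; ring

lemma Hop2_one : Hop 1 (Finsupp.single seq2 1) = -(Finsupp.single seq1 1) := by
  unfold Hop; rw [finsum_eq_single _ (0 : ℤ)]
  · have e1 : ((0 : ℤ) : ℚ) + 1/2 + ((1:ℕ):ℚ) = 3/2 := by norm_num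
    have e2 : -(((0 : ℤ) : ℚ) + 1/2) = -(1/2) := by norm_num
    rw [e1, e2, psiStarOp_single, one_smul,
      psiStarVec_eq _ _ 2 (seq2_ne _ (by norm_num) (by norm_num) (by norm_num))
        (by norm_num [seq2]) (by intro k hk; interval_cases k <;> norm_num [seq2]),
      insert2_seq2]
    erw [map_smul, psiOp_single,
      psiVec_eq _ _ 1 (by norm_num [seqW]) (by intro k hk; interval_cases k; norm_num [seqW]),
      del1_seqW]
    norm_num
    exact neg_one_smul ℚ _
  · intro m hm
    exact term2_ne 1 (le_refl 1) m (by intro h; apply hm; omega)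

lemma Hop2_two : Hop 2 (Finsupp.single seq2 1) = Finsupp.single seqE 1 := by
  unfold Hop; rw [finsum_eq_single _ (-1 : ℤ)]
  · have e1 : ((-1 : ℤ) : ℚ) + 1/2 + ((2:ℕ):ℚ) = 3/2 := by norm_num
    have e2 : -(((-1 : ℤ) : ℚ) + 1/2) = 1/2 := by norm_num
    rw [e1, e2, psiStarOp_single, one_smul,
      psiStarVec_eq _ _ 2 (seq2_ne _ (by norm_num) (by norm_num) (by norm_num))
        (by norm_num [seq2]) (by intro k hk; interval_cases k <;> norm_num [seq2]),
      insert2_seq2]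
    erw [map_smul, psiOp_single,
      psiVec_eq _ _ 0 (by norm_num [seqW]) (by intro k hk; omega),
      del0_seqW]
    norm_num
    exact one_smul ℚ _
  · intro m hm
    exact term2_ne 2 (by norm_num) m (by intro h; apply hm; omega)

lemma Hop2_ge3 (n : ℕ) (hn : 3 ≤ n) : Hop n (Finsupp.single seq2 1) = 0 := by
  apply finsum_eq_zero_of_forall_eq_zero
  intro m
  by_cases hm : m = 1 - (n:ℤ)
  · subst hm
    have e1 : ((1 - (n:ℤ) : ℤ) : ℚ) + 1/2 + ((n:ℕ):ℚ) = 3/2 := by push_cast; ring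
    rw [psiStarOp_single, one_smul, e1,
      psiStarVec_eq _ _ 2 (seq2_ne _ (by norm_num) (by norm_num) (by norm_num))
        (by norm_num [seq2]) (by intro k hk; interval_cases k <;> norm_num [seq2]),
      insert2_seq2]
    erw [map_smul, psiOp_single]
    rw [psiVec_eq_zero, smul_zero, smul_zero]
    apply seqW_ne
    have h3 : (3:ℚ) ≤ n := by exact_mod_cast hn
    push_cast
    linarith
  · exact term2_ne n (by omega) m hm

lemma Hop_zero (n : ℕ) : Hop n (0 : Fock) = 0 := by
  rw [Hop]
  apply finsum_eq_zero_of_forall_eq_zero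
  intro m
  rw [map_zero, map_zero]

lemma Hop_neg (n : ℕ) (v : Fock) : Hop n (-v) = -(Hop n v) := by
  rw [Hop, Hop, ← finsum_neg_distrib]
  congr 1
  funext m
  rw [map_neg, map_neg]

lemma Bop_ket2 : BopF (Finsupp.single seq2 1) = Finsupp.single seqE 1 := by
  unfold BopF; rw [finsum_eq_single _ 1]
  · rw [if_neg one_ne_zero, Hop2_one]
    erw [Hop_neg, Hop1_one, neg_neg]
    have : 2 * 1 = 2 := by norm_num
    rw [this, Hop2_two]
    erw [← add_smul]
    norm_num
    exact one_smul ℚ _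
  · intro n hn
    match n, hn with
    | 0, _ => rfl
    | 2, _ =>
        rw [if_neg (by norm_num), Hop2_two, HopE 2 (by norm_num)]
        have : 2 * 2 = 4 := by norm_num
        rw [this, Hop2_ge3 4 (by norm_num), smul_zero, add_zero, smul_zero]
    | (k+3), _ =>
        rw [if_neg (Nat.succ_ne_zero _), Hop2_ge3 (k+3) (by omega), Hop_zero,
          Hop2_ge3 (2*(k+3)) (by omega), smul_zero, add_zero, smul_zero]

lemma Bop_ketE : BopF (Finsupp.single seqE 1) = 0 := by
  unfold BopF
  apply finsum_eq_zero_of_forall_eq_zero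
  intro n
  match n with
  | 0 => rfl
  | (k+1) =>
      rw [if_neg (Nat.succ_ne_zero _), HopE (k+1) (by omega), Hop_zero,
        HopE (2*(k+1)) (by omega), smul_zero, add_zero, smul_zero]

-- ### empty diagram
def botT : SemistandardYoungTableau (⊥ : YoungDiagram) :=
  ⟨fun _ _ => 0,
   fun _ hmem => absurd hmem (YoungDiagram.notMem_bot _),
   fun _ hmem => absurd hmem (YoungDiagram.notMem_bot _),
   fun _ => rfl⟩

lemma eq_botT (T : SemistandardYoungTableau (⊥ : YoungDiagram)) : T = botT :=
  SemistandardYoungTableau.ext fun _ _ => T.zeros (YoungDiagram.notMem_bot _)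

lemma weight_botT (T : SemistandardYoungTableau (⊥ : YoungDiagram)) : ssytWeight T = 0 := by
  rw [ssytWeight, YoungDiagram.cells_bot, Finset.sum_empty]

lemma schur_bot : schurFn ⊥ = 1 := by
  funext d
  have h1 : (1 : MvPowerSeries ℕ ℚ) d = if d = 0 then 1 else 0 := by
    exact MvPowerSeries.coeff_one d
  show ((Nat.card {T : SemistandardYoungTableau (⊥ : YoungDiagram) // ssytWeight T = d} : ℕ) : ℚ)
      = (1 : MvPowerSeries ℕ ℚ) d
  rw [h1]
  by_cases hd : d = 0
  · subst hd
    haveI : Unique {T : SemistandardYoungTableau (⊥ : YoungDiagram) // ssytWeight T = 0} :=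
      { default := ⟨botT, weight_botT botT⟩
        uniq := fun T => Subtype.ext (eq_botT T.1) }
    rw [Nat.card_unique, if_pos rfl]
    norm_num
  · haveI : IsEmpty {T : SemistandardYoungTableau (⊥ : YoungDiagram) // ssytWeight T = d} :=
      ⟨fun T => hd (by rw [← T.2]; exact weight_botT T.1)⟩
    rw [Nat.card_of_isEmpty, if_neg hd]
    norm_num

-- ### the (2) diagram
def mkT (a b : ℕ) (hab : a ≤ b) : SemistandardYoungTableau yd2 :=
  ⟨fun i j => if i = 0 ∧ j = 0 then a else if i = 0 ∧ j = 1 then b else 0,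
   by
    intro i j1 j2 hj hmem
    rw [mem_yd2] at hmem
    have hij : i = 0 ∧ (j2 = 0 ∨ j2 = 1) := by
      rcases hmem with h | h <;> rw [Prod.mk.injEq] at h <;> tauto
    obtain ⟨rfl, hj2⟩ := hij
    have hj2' : j2 = 1 := by omega
    have hj1 : j1 = 0 := by omega
    subst hj2'; subst hj1
    simpa using hab,
   by
    intro i1 i2 j hi hmem
    rw [mem_yd2] at hmem
    exfalso
    rcases hmem with h | h <;> rw [Prod.mk.injEq] at h <;> omega,
   by
    intro i j hmem
    rw [mem_yd2] at hmem
    push_neg at hmem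
    refine (if_neg ?_).trans (if_neg ?_)
    · rintro ⟨rfl, rfl⟩; exact hmem.1 rfl
    · rintro ⟨rfl, rfl⟩; exact hmem.2 rfl⟩

lemma mkT_00 (a b : ℕ) (hab : a ≤ b) : mkT a b hab 0 0 = a := by
  show (if (0:ℕ) = 0 ∧ (0:ℕ) = 0 then a else if (0:ℕ) = 0 ∧ (0:ℕ) = 1 then b else 0) = a
  norm_num

lemma mkT_01 (a b : ℕ) (hab : a ≤ b) : mkT a b hab 0 1 = b := by
  show (if (0:ℕ) = 0 ∧ (1:ℕ) = 0 then a else if (0:ℕ) = 0 ∧ (1:ℕ) = 1 then b else 0) = b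
  norm_num

lemma mkT_other (a b : ℕ) (hab : a ≤ b) (i j : ℕ) (h0 : ¬(i = 0 ∧ j = 0))
    (h1 : ¬(i = 0 ∧ j = 1)) : mkT a b hab i j = 0 := by
  exact (if_neg h0).trans (if_neg h1)

lemma cells_yd2 : yd2.cells = {(0,0),(0,1)} := rfl

lemma weight_yd2 (T : SemistandardYoungTableau yd2) :
    ssytWeight T = Finsupp.single (T 0 0) 1 + Finsupp.single (T 0 1) 1 := by
  rw [ssytWeight, cells_yd2, Finset.sum_insert (by decide), Finset.sum_singleton]

lemma mkT_eq (T : SemistandardYoungTableau yd2) :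
    T = mkT (T 0 0) (T 0 1) (T.row_weak (by norm_num) ((mem_yd2 (0,1)).mpr (Or.inr rfl))) := by
  apply SemistandardYoungTableau.ext
  intro i j
  by_cases h0 : i = 0 ∧ j = 0
  · obtain ⟨rfl, rfl⟩ := h0; rw [mkT_00]
  · by_cases h1 : i = 0 ∧ j = 1
    · obtain ⟨rfl, rfl⟩ := h1; rw [mkT_01]
    · have hmem : (i, j) ∉ yd2 := by
        rw [mem_yd2]; push_neg
        constructor <;> (rw [Ne, Prod.mk.injEq]; tauto)
      rw [T.zeros hmem, mkT_other _ _ _ _ _ h0 h1]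

lemma pair_sum (a b : ℕ) :
    ((Finsupp.single a 1 + Finsupp.single b 1 : ℕ →₀ ℕ).sum fun _ e => e) = 2 := by
  classical
  rw [Finsupp.sum_add_index' (fun _ => rfl) (fun _ _ _ => rfl), Finsupp.sum_single_index rfl,
    Finsupp.sum_single_index rfl]

lemma pair_exists (d : ℕ →₀ ℕ) (hd : (d.sum fun _ e => e) = 2) :
    ∃ a b : ℕ, a ≤ b ∧ Finsupp.single a 1 + Finsupp.single b 1 = d := by
  classical
  have hcard : Multiset.card (Finsupp.toMultiset d) = 2 := by
    rw [Finsupp.card_toMultiset]; exact hd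
  obtain ⟨x, y, hxy⟩ := Multiset.card_eq_two.mp hcard
  have key : ∀ p q : ℕ, Finsupp.toMultiset d = {p, q} →
      Finsupp.single p 1 + Finsupp.single q 1 = d := by
    intro p q hpq
    have hinj : Function.Injective (Finsupp.toMultiset : (ℕ →₀ ℕ) → Multiset ℕ) :=
      Function.LeftInverse.injective (g := Multiset.toFinsupp) Finsupp.toMultiset_toFinsupp
    apply hinj
    rw [map_add, Finsupp.toMultiset_single, Finsupp.toMultiset_single, hpq]
    simp [Multiset.insert_eq_cons, Multiset.singleton_add]
  rcases le_total x y with h | h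
  · exact ⟨x, y, h, key x y hxy⟩
  · refine ⟨y, x, h, key y x ?_⟩
    rw [hxy, Multiset.pair_comm]

lemma pair_unique (a b c e : ℕ) (hab : a ≤ b) (hce : c ≤ e)
    (h : Finsupp.single a 1 + Finsupp.single b 1
       = (Finsupp.single c 1 + Finsupp.single e 1 : ℕ →₀ ℕ)) : a = c ∧ b = e := by
  classical
  have hx : ∀ x, (if a = x then 1 else 0) + (if b = x then 1 else 0)
      = (if c = x then (1:ℕ) else 0) + (if e = x then 1 else 0) := by
    intro x
    have := DFunLike.congr_fun h x
    simpa [Finsupp.add_apply, Finsupp.single_apply] using this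
  have hac : a = c := by
    have h1 := hx a
    have h2 := hx c
    split_ifs at h1 h2 <;> omega
  subst hac
  have hbe : b = e := by
    have h1 := hx b
    have h2 := hx e
    split_ifs at h1 h2 <;> omega
  exact ⟨rfl, hbe⟩

lemma schur_yd2 : schurFn yd2 = hFn 2 := by
  funext d
  show ((Nat.card {T : SemistandardYoungTableau yd2 // ssytWeight T = d} : ℕ) : ℚ)
      = (if (d.sum fun _ e => e) = 2 then (1:ℚ) else 0)
  by_cases hd : (d.sum fun _ e => e) = 2
  · obtain ⟨a, b, hab, hsum⟩ := pair_exists d hd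
    haveI : Unique {T : SemistandardYoungTableau yd2 // ssytWeight T = d} :=
      { default := ⟨mkT a b hab, by rw [weight_yd2, mkT_00, mkT_01, hsum]⟩
        uniq := by
          rintro ⟨T, hT⟩
          apply Subtype.ext
          show T = mkT a b hab
          have hw := weight_yd2 T
          rw [hT, ← hsum] at hw
          obtain ⟨h1, h2⟩ := pair_unique a b (T 0 0) (T 0 1) hab
            (T.row_weak (by norm_num) ((mem_yd2 (0,1)).mpr (Or.inr rfl))) hw
          have := mkT_eq T
          rw [this]
          congr 1 <;> omega }
    rw [Nat.card_unique, if_pos hd]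
    norm_num
  · haveI : IsEmpty {T : SemistandardYoungTableau yd2 // ssytWeight T = d} := by
      constructor
      rintro ⟨T, hT⟩
      apply hd
      rw [← hT, weight_yd2]
      exact pair_sum _ _
    rw [Nat.card_of_isEmpty, if_neg hd]
    norm_num

theorem pi_type_vacuum_expectation_eq_h2_sub_one
    (L : Fock → Fock)
    (hL : ∀ (v : Fock) (K : ℕ), BopF^[K] v = 0 →
      L v = ∑ k ∈ Finset.range K,
        (((-1 : ℚ)) ^ k * ((k.factorial : ℚ)⁻¹)) • BopF^[k] v)
    (Φ : Fock →ₗ[ℚ] MvPowerSeries ℕ ℚ)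
    (hΦ : ∀ lam : YoungDiagram, Φ (ket lam) = schurFn lam) :
    Φ (L (psiOp (-(3/2 : ℚ)) (psiStarOp (-(1/2 : ℚ)) (ket ⊥))))
      = hFn 2 - 1 := by
  have hv : psiOp (-(3/2 : ℚ)) (psiStarOp (-(1/2 : ℚ)) (ket ⊥)) = Finsupp.single seq2 1 := by
    rw [ket, mayaOf_bot, psiStarOp_single, one_smul,
      psiStarVec_eq _ _ 0
        (by intro k; simp only [seqE]; have : (0:ℚ) ≤ k := Nat.cast_nonneg k; intro hh; linarith [hh])
        (by norm_num [seqE]) (by intro k hk; exact absurd hk (Nat.not_lt_zero k)),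
      insert0_seqE, pow_zero]
    erw [one_smul]
    rw [psiOp_single, one_smul,
      psiVec_eq _ _ 2 (by norm_num [seqW]) (by intro k hk; interval_cases k <;> norm_num [seqW]),
      del2_seqW]
    norm_num
    exact one_smul ℚ _
  have hBK : BopF^[2] (Finsupp.single seq2 1) = 0 := by
    show BopF (BopF^[1] (Finsupp.single seq2 1)) = 0
    show BopF (BopF (Finsupp.single seq2 1)) = 0
    rw [Bop_ket2, Bop_ketE]
  rw [hv, hL _ 2 hBK, Finset.sum_range_succ, Finset.sum_range_one]
  have h0 : (((-1 : ℚ)) ^ 0 * ((Nat.factorial 0 : ℚ)⁻¹)) = 1 := by norm_num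
  have h1 : (((-1 : ℚ)) ^ 1 * ((Nat.factorial 1 : ℚ)⁻¹)) = -1 := by norm_num
  rw [h0, h1]
  have e0 : BopF^[0] (Finsupp.single seq2 1) = Finsupp.single seq2 1 := rfl
  have e1 : BopF^[1] (Finsupp.single seq2 1) = Finsupp.single seqE 1 := by
    show BopF (Finsupp.single seq2 1) = _
    exact Bop_ket2
  erw [e0, e1, one_smul, map_add, map_smul]
  have k2 : (Finsupp.single seq2 1 : Fock) = ket yd2 := by rw [ket, mayaOf_yd2]
  have kE : (Finsupp.single seqE 1 : Fock) = ket ⊥ := by rw [ket, mayaOf_bot]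
  rw [k2, kE, hΦ, hΦ, schur_yd2, schur_bot, neg_one_smul, ← sub_eq_add_neg]
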